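/- (Asymptotic Tangent-Secant Rule.) In the ARW model with parameters 1/2 < β < 1 and ρ*(β) < r < 1, let T_p be any sequence such that T_p maximizes t ↦ Sep(t; ε_p, τ_p) over t ∈ [0,∞). Then Lfdr(T_p) / ((1 + FDR(T_p))/2) → 1 as p → ∞, where FDR and Lfdr are computed with ε = ε_p, τ = τ_p. -/

import Mathlib

open Filter Set MeasureTheory

noncomputable def gaussPDF (t : ℝ) : ℝ := (Real.sqrt (2 * Real.pi))⁻¹ * Real.exp (-(t ^ 2) / 2)

/-- standard normal CDF Φ -/
noncomputable def normCDF (t : ℝ) : ℝ := ∫ x in Set.Iic t, gaussPDF x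

/-- survival function of |N(τ,1)| -/
noncomputable def psiBar (τ t : ℝ) : ℝ := (1 - normCDF (t - τ)) + normCDF (-t - τ)

noncomputable def tprFn (ε τ t : ℝ) : ℝ := ε * psiBar τ t

noncomputable def fprFn (ε t : ℝ) : ℝ := (1 - ε) * psiBar 0 t

noncomputable def idrFn (ε τ t : ℝ) : ℝ := ε * normCDF (-t - τ)

/-- clipping proxy separation -/
noncomputable def sepFn (ε τ t : ℝ) : ℝ :=
  2 * τ * (tprFn ε τ t - 2 * idrFn ε τ t) / Real.sqrt (tprFn ε τ t + fprFn ε t)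

/-- proxy false discovery rate -/
noncomputable def fdrFn (ε τ t : ℝ) : ℝ := fprFn ε t / (tprFn ε τ t + fprFn ε t)

/-- magnitude of derivative of TPR -/
noncomputable def tprD (ε τ t : ℝ) : ℝ := ε * (gaussPDF (t - τ) + gaussPDF (t + τ))

/-- magnitude of derivative of FPR -/
noncomputable def fprD (ε t : ℝ) : ℝ := 2 * (1 - ε) * gaussPDF t

/-- proxy local false discovery rate -/
noncomputable def lfdrFn (ε τ t : ℝ) : ℝ := fprD ε t / (tprD ε τ t + fprD ε t)

noncomputable def rhoStar (β : ℝ) : ℝ :=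
  if β ≤ 1 / 2 then 0 else if β ≤ 3 / 4 then β - 1 / 2 else (1 - Real.sqrt (1 - β)) ^ 2

noncomputable def qStar (r β : ℝ) : ℝ := if r ≤ β / 3 then 4 * r else (β + r) ^ 2 / (4 * r)

/-- sparsity ε_p = p^{-β} in the ARW model -/
noncomputable def epsP (β : ℝ) (p : ℕ) : ℝ := (p : ℝ) ^ (-β)

/-- strength τ_p = √(2 r log p) in the ARW model -/
noncomputable def tauP (r : ℝ) (p : ℕ) : ℝ := Real.sqrt (2 * r * Real.log p)

/-- threshold t_p(q) = √(2 q log p) -/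
noncomputable def tP (q : ℝ) (p : ℕ) : ℝ := Real.sqrt (2 * q * Real.log p)

/-- folded two-point mixture G_{ε,τ} -/
noncomputable def gMix (ε τ t : ℝ) : ℝ :=
  (1 - ε) * (normCDF t - normCDF (-t)) + ε * (normCDF (t - τ) - normCDF (-t - τ))

/-- ideal HC objective -/
noncomputable def hcObj (ε τ t : ℝ) : ℝ :=
  ((1 - gMix ε τ t) - psiBar 0 t) / Real.sqrt (gMix ε τ t * (1 - gMix ε τ t))

/-- useful feature discovery exponent δ(q) -/
noncomputable def deltaExp (β r q : ℝ) : ℝ :=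
  if q ≤ r then 1 - β else 1 - β - (Real.sqrt q - Real.sqrt r) ^ 2

/-- separation growth exponent γ(q) -/
noncomputable def gammaExp (β r q : ℝ) : ℝ :=
  deltaExp β r q - max (1 - q) (deltaExp β r q) / 2

/-!
At an interior maximizer `t` of `Sep`, the first-order condition turns `Lfdr / ((1 + FDR)/2)`
into `P / (P + a - b)` with `P = 2 (TPR + FPR) FPR'`, `a = 4 ε φ(t+τ) (TPR + FPR)` and
`b = 2 IDR (TPR' + FPR')`, the last two coming from the clipped mass `IDR`. Gaussian tail
bounds give `0 ≤ a ≤ e^{-τ²/2} P` and `0 ≤ b ≤ 2 e^{-τ²/2} P` once `ε ≤ 1/2` and `τ ≥ 1`, so the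
ratio is within `3 e^{-τ²/2}` of `1`. In the ARW model `ε_p → 0` and `τ_p → ∞`.
-/

open Real

lemma gaussPDF_eq_gaussianPDFReal : gaussPDF = ProbabilityTheory.gaussianPDFReal 0 1 := by
  ext t
  simp [gaussPDF, ProbabilityTheory.gaussianPDFReal]

lemma gaussPDF_pos (t : ℝ) : 0 < gaussPDF t := by
  rw [gaussPDF_eq_gaussianPDFReal]
  exact ProbabilityTheory.gaussianPDFReal_pos _ _ _ one_ne_zero

lemma continuous_gaussPDF : Continuous gaussPDF := by
  unfold gaussPDF
  fun_prop

lemma integrable_gaussPDF : Integrable gaussPDF := by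
  rw [gaussPDF_eq_gaussianPDFReal]
  exact ProbabilityTheory.integrable_gaussianPDFReal _ _

lemma integral_gaussPDF : ∫ x, gaussPDF x = 1 := by
  rw [gaussPDF_eq_gaussianPDFReal]
  exact ProbabilityTheory.integral_gaussianPDFReal_eq_one _ one_ne_zero

lemma gaussPDF_neg (t : ℝ) : gaussPDF (-t) = gaussPDF t := by
  simp [gaussPDF]

lemma gaussPDF_le_gaussPDF_of_abs_le {a b : ℝ} (h : |a| ≤ |b|) : gaussPDF b ≤ gaussPDF a := by
  have hsq : a ^ 2 ≤ b ^ 2 := sq_le_sq.mpr h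
  unfold gaussPDF
  gcongr ?_ * exp ?_
  linarith

lemma gaussPDF_le_half (t : ℝ) : gaussPDF t ≤ 1 / 2 := by
  have h2pi : (2 : ℝ) ≤ √(2 * π) :=
    le_sqrt_of_sq_le (by nlinarith [pi_gt_three])
  calc gaussPDF t ≤ (√(2 * π))⁻¹ * 1 := by
        unfold gaussPDF
        gcongr
        exact exp_le_one_iff.mpr (by nlinarith [sq_nonneg t])
    _ ≤ 1 / 2 := by
        rw [mul_one, one_div]
        exact inv_anti₀ two_pos h2pi

lemma hasDerivAt_gaussPDF (t : ℝ) : HasDerivAt gaussPDF (-t * gaussPDF t) t := by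
  have hexponent : HasDerivAt (fun x : ℝ => -(x ^ 2) / 2) (-t) t :=
    ((hasDerivAt_pow 2 t).neg.div_const 2).congr_deriv (by ring)
  exact (hexponent.exp.const_mul (√(2 * π))⁻¹).congr_deriv (by unfold gaussPDF; ring)

lemma tendsto_gaussPDF_atTop : Tendsto gaussPDF atTop (nhds 0) := by
  have h : Tendsto (fun t : ℝ => -(t ^ 2) / 2) atTop atBot :=
    (tendsto_neg_atTop_atBot.comp (tendsto_pow_atTop two_ne_zero)).atBot_div_const two_pos
  have h' := (tendsto_exp_atBot.comp h).const_mul (√(2 * π))⁻¹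
  rwa [mul_zero] at h'

/-- Gaussian exponents combine as `(t+τ)² + (t+σ)² = 2t² + 2t(τ+σ) + τ² + σ²`. -/
lemma gaussPDF_add_mul_gaussPDF_add_le {t τ σ : ℝ} (h : 0 ≤ t * (τ + σ)) :
    gaussPDF (t + τ) * gaussPDF (t + σ) ≤ exp (-τ ^ 2 / 2) * gaussPDF t ^ 2 := by
  unfold gaussPDF
  have hexp : exp (-(t + τ) ^ 2 / 2) * exp (-(t + σ) ^ 2 / 2)
      ≤ exp (-τ ^ 2 / 2) * exp (-t ^ 2 / 2) ^ 2 := by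
    rw [← exp_add, ← exp_nat_mul, ← exp_add]
    apply exp_le_exp.mpr
    push_cast
    nlinarith [sq_nonneg σ]
  calc (√(2 * π))⁻¹ * exp (-(t + τ) ^ 2 / 2) * ((√(2 * π))⁻¹ * exp (-(t + σ) ^ 2 / 2))
      = (√(2 * π))⁻¹ ^ 2 * (exp (-(t + τ) ^ 2 / 2) * exp (-(t + σ) ^ 2 / 2)) := by ring
    _ ≤ (√(2 * π))⁻¹ ^ 2 * (exp (-τ ^ 2 / 2) * exp (-t ^ 2 / 2) ^ 2) := by gcongr
    _ = exp (-τ ^ 2 / 2) * ((√(2 * π))⁻¹ * exp (-t ^ 2 / 2)) ^ 2 := by ring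

lemma gaussPDF_add_le {t τ : ℝ} (h : 0 ≤ t * τ) :
    gaussPDF (t + τ) ≤ exp (-τ ^ 2 / 2) * gaussPDF t := by
  have := gaussPDF_add_mul_gaussPDF_add_le (t := t) (τ := τ) (σ := 0) (by simpa using h)
  rw [add_zero, sq (gaussPDF t), ← mul_assoc] at this
  exact le_of_mul_le_mul_right this (gaussPDF_pos t)

lemma normCDF_sub (a b : ℝ) : normCDF b - normCDF a = ∫ x in a..b, gaussPDF x := by
  rw [normCDF, normCDF, intervalIntegral.integral_Iic_sub_Iic integrable_gaussPDF.integrableOn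
    integrable_gaussPDF.integrableOn]

lemma one_sub_normCDF (t : ℝ) : 1 - normCDF t = ∫ x in Ioi t, gaussPDF x := by
  rw [← integral_gaussPDF, ← intervalIntegral.integral_Iic_add_Ioi
    integrable_gaussPDF.integrableOn integrable_gaussPDF.integrableOn, normCDF, add_sub_cancel_left]

lemma hasDerivAt_normCDF (t : ℝ) : HasDerivAt normCDF (gaussPDF t) t := by
  have h : normCDF = fun u => normCDF 0 + ∫ x in (0 : ℝ)..u, gaussPDF x := by
    ext u; rw [← normCDF_sub]; ring
  rw [h]
  exact (intervalIntegral.integral_hasDerivAt_right integrable_gaussPDF.intervalIntegrable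
    continuous_gaussPDF.aestronglyMeasurable.stronglyMeasurableAtFilter
    continuous_gaussPDF.continuousAt).const_add _

lemma normCDF_strictMono : StrictMono normCDF := fun a b hab => by
  have := intervalIntegral.intervalIntegral_pos_of_pos integrable_gaussPDF.intervalIntegrable
    gaussPDF_pos hab
  linarith [normCDF_sub a b]

lemma normCDF_nonneg (t : ℝ) : 0 ≤ normCDF t :=
  setIntegral_nonneg measurableSet_Iic fun x _ => (gaussPDF_pos x).le

lemma normCDF_le_one (t : ℝ) : normCDF t ≤ 1 := by
  have := setIntegral_nonneg (μ := volume) measurableSet_Ioi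
    fun x (_ : x ∈ Ioi t) => (gaussPDF_pos x).le
  linarith [one_sub_normCDF t]

lemma normCDF_pos (t : ℝ) : 0 < normCDF t :=
  (normCDF_nonneg (t - 1)).trans_lt (normCDF_strictMono (by linarith))

lemma normCDF_lt_one (t : ℝ) : normCDF t < 1 :=
  (normCDF_strictMono (by linarith)).trans_le (normCDF_le_one (t + 1))

lemma normCDF_neg (t : ℝ) : normCDF (-t) = 1 - normCDF t := by
  rw [one_sub_normCDF, normCDF, ← neg_neg t, ← integral_comp_neg_Iic, neg_neg]
  simp_rw [gaussPDF_neg]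

lemma normCDF_zero : normCDF 0 = 1 / 2 := by
  have := normCDF_neg 0
  rw [neg_zero] at this
  linarith

lemma integrable_mul_gaussPDF : Integrable (fun x => x * gaussPDF x) := by
  refine ((integrable_mul_exp_neg_mul_sq (b := 1 / 2) (by norm_num)).const_mul
    (√(2 * π))⁻¹).congr (Eventually.of_forall fun x => ?_)
  simp only [gaussPDF]
  ring_nf

lemma integral_Ioi_mul_gaussPDF (a : ℝ) : ∫ x in Ioi a, x * gaussPDF x = gaussPDF a := by
  have h := integral_Ioi_of_hasDerivAt_of_tendsto (f := fun x => -gaussPDF x) (a := a) (m := 0)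
    continuous_gaussPDF.neg.continuousWithinAt
    (fun x _ => (hasDerivAt_gaussPDF x).neg.congr_deriv (by ring))
    integrable_mul_gaussPDF.integrableOn (by simpa using tendsto_gaussPDF_atTop.neg)
  rw [h]
  ring

lemma one_sub_normCDF_le_gaussPDF {x : ℝ} (hx : 1 ≤ x) : 1 - normCDF x ≤ gaussPDF x := by
  rw [one_sub_normCDF, ← integral_Ioi_mul_gaussPDF]
  refine setIntegral_mono_on integrable_gaussPDF.integrableOn ?_ measurableSet_Ioi
    fun u (hu : x < u) => le_mul_of_one_le_left (gaussPDF_pos u).le (by linarith)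
  exact integrable_mul_gaussPDF.integrableOn

lemma gaussPDF_add_one_le_one_sub_normCDF {s : ℝ} (hs : 0 ≤ s) :
    gaussPDF (s + 1) ≤ 1 - normCDF s := by
  have hslab : gaussPDF (s + 1) ≤ ∫ x in s..s + 1, gaussPDF x := by
    have := intervalIntegral.integral_mono_on (by linarith) intervalIntegrable_const
      integrable_gaussPDF.intervalIntegrable fun u (hu : u ∈ Icc s (s + 1)) =>
        gaussPDF_le_gaussPDF_of_abs_le (a := u) (b := s + 1)
          (by rw [abs_of_nonneg (by linarith [hu.1]), abs_of_nonneg (by linarith)]; exact hu.2)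
    simpa using this
  linarith [normCDF_sub s (s + 1), normCDF_le_one (s + 1)]

lemma gaussPDF_le_one_sub_normCDF_sub {t τ : ℝ} (ht : 0 ≤ t) (hτ : 1 ≤ τ) :
    gaussPDF t ≤ 1 - normCDF (t - τ) := by
  rcases le_or_gt t τ with htτ | htτ
  · have : normCDF (t - τ) ≤ 1 / 2 :=
      normCDF_zero ▸ normCDF_strictMono.monotone (by linarith)
    linarith [gaussPDF_le_half t]
  · refine le_trans ?_ (gaussPDF_add_one_le_one_sub_normCDF (s := t - τ) (by linarith))
    apply gaussPDF_le_gaussPDF_of_abs_le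
    rw [abs_of_nonneg (by linarith), abs_of_nonneg ht]
    linarith

lemma psiBar_pos (τ t : ℝ) : 0 < psiBar τ t := by
  unfold psiBar
  linarith [normCDF_lt_one (t - τ), normCDF_pos (-t - τ)]

lemma hasDerivAt_normCDF_neg_sub (τ t : ℝ) :
    HasDerivAt (fun u => normCDF (-u - τ)) (-gaussPDF (t + τ)) t := by
  have h := (hasDerivAt_normCDF (-t - τ)).comp t ((hasDerivAt_neg t).sub_const τ)
  rwa [show -t - τ = -(t + τ) by ring, gaussPDF_neg, mul_neg_one] at h

lemma hasDerivAt_psiBar (τ t : ℝ) :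
    HasDerivAt (psiBar τ) (-(gaussPDF (t - τ) + gaussPDF (t + τ))) t := by
  have h := ((hasDerivAt_normCDF (t - τ)).comp t ((hasDerivAt_id t).sub_const τ)).const_sub 1
  exact (h.add (hasDerivAt_normCDF_neg_sub τ t)).congr_deriv (by ring)

lemma hasDerivAt_tprFn (ε τ t : ℝ) : HasDerivAt (tprFn ε τ) (-tprD ε τ t) t :=
  ((hasDerivAt_psiBar τ t).const_mul ε).congr_deriv (by rw [tprD]; ring)

lemma hasDerivAt_fprFn (ε t : ℝ) : HasDerivAt (fprFn ε) (-fprD ε t) t :=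
  ((hasDerivAt_psiBar 0 t).const_mul (1 - ε)).congr_deriv (by rw [fprD, sub_zero, add_zero]; ring)

lemma hasDerivAt_idrFn (ε τ t : ℝ) : HasDerivAt (idrFn ε τ) (-(ε * gaussPDF (t + τ))) t :=
  ((hasDerivAt_normCDF_neg_sub τ t).const_mul ε).congr_deriv (by ring)

lemma tprFn_pos {ε : ℝ} (hε : 0 < ε) (τ t : ℝ) : 0 < tprFn ε τ t := mul_pos hε (psiBar_pos τ t)

lemma fprFn_pos {ε : ℝ} (hε : ε < 1) (t : ℝ) : 0 < fprFn ε t :=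
  mul_pos (by linarith) (psiBar_pos 0 t)

lemma tprFn_add_fprFn_pos {ε : ℝ} (hε₀ : 0 < ε) (hε₁ : ε < 1) (τ t : ℝ) :
    0 < tprFn ε τ t + fprFn ε t :=
  add_pos (tprFn_pos hε₀ τ t) (fprFn_pos hε₁ t)

lemma tprD_pos {ε : ℝ} (hε : 0 < ε) (τ t : ℝ) : 0 < tprD ε τ t :=
  mul_pos hε (add_pos (gaussPDF_pos (t - τ)) (gaussPDF_pos (t + τ)))

lemma fprD_pos {ε : ℝ} (hε : ε < 1) (t : ℝ) : 0 < fprD ε t :=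
  mul_pos (by linarith) (gaussPDF_pos t)

lemma tprD_add_fprD_pos {ε : ℝ} (hε₀ : 0 < ε) (hε₁ : ε < 1) (τ t : ℝ) :
    0 < tprD ε τ t + fprD ε t :=
  add_pos (tprD_pos hε₀ τ t) (fprD_pos hε₁ t)

lemma IsMaxOn.hasDerivAt_nonpos_of_Ici {f : ℝ → ℝ} {a d : ℝ} (h : IsMaxOn f (Ici a) a)
    (hf : HasDerivAt f d a) : d ≤ 0 := by
  have hcone : (1 : ℝ) ∈ posTangentConeAt (Ici a) a :=
    mem_posTangentConeAt_of_segment_subset fun x hx => by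
      rw [segment_eq_Icc (by linarith)] at hx
      exact hx.1
  simpa using (h.localize.on_subset subset_rfl).hasFDerivWithinAt_nonpos
    hf.hasFDerivAt.hasFDerivWithinAt hcone

lemma abs_div_add_sub_sub_one_le {P a b e : ℝ} (hP : 0 < P) (ha₀ : 0 ≤ a) (ha : a ≤ e * P)
    (hb₀ : 0 ≤ b) (hb : b ≤ 2 * e * P) (he : e ≤ 1 / 6) :
    |P / (P + a - b) - 1| ≤ 3 * e := by
  have hden : 2 / 3 * P ≤ P + a - b := by nlinarith
  have hden₀ : 0 < P + a - b := by linarith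
  rw [div_sub_one hden₀.ne', abs_div, abs_of_pos hden₀, div_le_iff₀ hden₀, abs_le]
  constructor <;> nlinarith

section Proxy

variable {ε τ t : ℝ}

lemma idrFn_eq : idrFn ε τ t = ε * (1 - normCDF (t + τ)) := by
  rw [idrFn, show -t - τ = -(t + τ) by ring, normCDF_neg]

lemma hasDerivAt_sepFn (hε₀ : 0 < ε) (hε₁ : ε < 1) :
    HasDerivAt (sepFn ε τ)
      (τ * (2 * (2 * (ε * gaussPDF (t + τ)) - tprD ε τ t) * (tprFn ε τ t + fprFn ε t)
          + (tprFn ε τ t - 2 * idrFn ε τ t) * (tprD ε τ t + fprD ε t))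
        / ((tprFn ε τ t + fprFn ε t) * √(tprFn ε τ t + fprFn ε t))) t := by
  have hS := tprFn_add_fprFn_pos hε₀ hε₁ τ t
  have hsqrt : 0 < √(tprFn ε τ t + fprFn ε t) := Real.sqrt_pos.mpr hS
  have hnum := ((hasDerivAt_tprFn ε τ t).sub ((hasDerivAt_idrFn ε τ t).const_mul 2)).const_mul
    (2 * τ)
  have hden := ((hasDerivAt_tprFn ε τ t).add (hasDerivAt_fprFn ε t)).sqrt hS.ne'
  refine (hnum.div hden hsqrt.ne').congr_deriv ?_
  simp only [Pi.add_apply, Pi.sub_apply]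
  field_simp
  rw [Real.sq_sqrt hS.le]
  ring

/-- At `t = 0` the numerator of `Sep` is stationary while its denominator decreases. -/
lemma not_isMaxOn_sepFn_zero (hε₀ : 0 < ε) (hε₁ : ε < 1) (hτ : 0 < τ) :
    ¬ IsMaxOn (sepFn ε τ) (Ici 0) 0 := by
  intro hmax
  have hderiv := hasDerivAt_sepFn (τ := τ) (t := 0) hε₀ hε₁
  have htpr : tprFn ε τ 0 = ε := by
    rw [tprFn, psiBar, zero_sub, neg_zero, zero_sub]
    ring
  have htprD : tprD ε τ 0 = 2 * (ε * gaussPDF (0 + τ)) := by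
    rw [tprD, zero_sub, gaussPDF_neg, zero_add]
    ring
  have hidr : idrFn ε τ 0 = ε * normCDF (-τ) := by
    rw [idrFn, neg_zero, zero_sub]
  have hhalf : normCDF (-τ) < 1 / 2 := normCDF_zero ▸ normCDF_strictMono (by linarith)
  have hS := tprFn_add_fprFn_pos hε₀ hε₁ τ 0
  have hD := tprD_add_fprD_pos hε₀ hε₁ τ 0
  have hpos : 0 < tprFn ε τ 0 - 2 * idrFn ε τ 0 := by
    rw [htpr, hidr]
    nlinarith
  refine absurd (hmax.hasDerivAt_nonpos_of_Ici hderiv) (not_le.mpr ?_)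
  rw [← htprD, sub_self, mul_zero, zero_mul, zero_add]
  exact div_pos (mul_pos hτ (mul_pos hpos hD)) (mul_pos hS (Real.sqrt_pos.mpr hS))

lemma sepFn_stationary (hε₀ : 0 < ε) (hε₁ : ε < 1) (hτ : 0 < τ) (ht : 0 < t)
    (hmax : IsMaxOn (sepFn ε τ) (Ici 0) t) :
    2 * (tprD ε τ t - 2 * (ε * gaussPDF (t + τ))) * (tprFn ε τ t + fprFn ε t)
      = (tprFn ε τ t - 2 * idrFn ε τ t) * (tprD ε τ t + fprD ε t) := by
  have hS := tprFn_add_fprFn_pos hε₀ hε₁ τ t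
  have hlocal : IsLocalMax (sepFn ε τ) t := hmax.isLocalMax (Ici_mem_nhds ht)
  have h := hlocal.hasDerivAt_eq_zero (hasDerivAt_sepFn hε₀ hε₁)
  rw [div_eq_zero_iff, mul_eq_zero] at h
  rcases h with (h | h) | h
  · exact absurd h hτ.ne'
  · linarith
  · exact absurd h (mul_pos hS (Real.sqrt_pos.mpr hS)).ne'

lemma gaussPDF_add_mul_tprD_add_fprD_le (hε₀ : 0 ≤ ε) (hε₁ : ε ≤ 1) (ht : 0 ≤ t) (hτ : 0 ≤ τ) :
    gaussPDF (t + τ) * (tprD ε τ t + fprD ε t) ≤ 2 * exp (-τ ^ 2 / 2) * gaussPDF t ^ 2 := by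
  have hsub := gaussPDF_add_mul_gaussPDF_add_le (t := t) (τ := τ) (σ := -τ) (by simp)
  have hadd := gaussPDF_add_mul_gaussPDF_add_le (t := t) (τ := τ) (σ := τ) (by positivity)
  have hzero := gaussPDF_add_mul_gaussPDF_add_le (t := t) (τ := τ) (σ := 0) (by positivity)
  rw [← sub_eq_add_neg] at hsub
  rw [add_zero] at hzero
  calc gaussPDF (t + τ) * (tprD ε τ t + fprD ε t)
      = ε * (gaussPDF (t + τ) * gaussPDF (t - τ) + gaussPDF (t + τ) * gaussPDF (t + τ))
        + 2 * (1 - ε) * (gaussPDF (t + τ) * gaussPDF t) := by rw [tprD, fprD]; ring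
    _ ≤ ε * (exp (-τ ^ 2 / 2) * gaussPDF t ^ 2 + exp (-τ ^ 2 / 2) * gaussPDF t ^ 2)
        + 2 * (1 - ε) * (exp (-τ ^ 2 / 2) * gaussPDF t ^ 2) := by
      gcongr
    _ = 2 * exp (-τ ^ 2 / 2) * gaussPDF t ^ 2 := by ring

lemma two_mul_gaussPDF_add_le_fprD (hε₀ : 0 ≤ ε) (hε : ε ≤ 1 / 2) (ht : 0 ≤ t) (hτ : 0 ≤ τ) :
    2 * (ε * gaussPDF (t + τ)) ≤ exp (-τ ^ 2 / 2) * fprD ε t := by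
  have hEφ := mul_pos (exp_pos (-τ ^ 2 / 2)) (gaussPDF_pos t)
  calc 2 * (ε * gaussPDF (t + τ)) ≤ 2 * (ε * (exp (-τ ^ 2 / 2) * gaussPDF t)) := by
        gcongr
        exact gaussPDF_add_le (mul_nonneg ht hτ)
    _ ≤ exp (-τ ^ 2 / 2) * fprD ε t := by
        rw [fprD]
        nlinarith [mul_nonneg (by linarith : (0 : ℝ) ≤ 1 - 2 * ε) hEφ.le]

/-- `1 - Φ(t+τ) ≤ φ(t+τ)` brings in the Gaussian product bound, and `φ(t) ≤ 1 - Φ(t-τ)` trades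
the resulting `ε φ(t)` for `TPR`. -/
lemma idrFn_mul_le (hε₀ : 0 < ε) (hε : ε ≤ 1 / 2) (ht : 0 ≤ t) (hτ : 1 ≤ τ) :
    idrFn ε τ t * (tprD ε τ t + fprD ε t)
      ≤ 2 * exp (-τ ^ 2 / 2) * ((tprFn ε τ t + fprFn ε t) * fprD ε t) := by
  have hε₁ : ε < 1 := by linarith
  have hD := tprD_add_fprD_pos hε₀ hε₁ τ t
  have hA := tprFn_pos hε₀ τ t
  have hφ := gaussPDF_pos t
  have htail := one_sub_normCDF_le_gaussPDF (x := t + τ) (by linarith)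
  have hdens := gaussPDF_add_mul_tprD_add_fprD_le (τ := τ) hε₀.le (by linarith) ht (by linarith)
  have hlow := gaussPDF_le_one_sub_normCDF_sub ht hτ
  have htpr : ε * (1 - normCDF (t - τ)) ≤ tprFn ε τ t := by
    rw [tprFn, psiBar]
    nlinarith [normCDF_nonneg (-t - τ)]
  have hfprD : gaussPDF t ≤ fprD ε t := by
    rw [fprD]
    nlinarith
  have hεφ : ε * gaussPDF t ≤ tprFn ε τ t := (mul_le_mul_of_nonneg_left hlow hε₀.le).trans htpr
  calc idrFn ε τ t * (tprD ε τ t + fprD ε t)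
      ≤ ε * (gaussPDF (t + τ) * (tprD ε τ t + fprD ε t)) := by
        rw [idrFn_eq, mul_assoc]
        gcongr
    _ ≤ ε * (2 * exp (-τ ^ 2 / 2) * gaussPDF t ^ 2) := by gcongr
    _ = 2 * exp (-τ ^ 2 / 2) * ((ε * gaussPDF t) * gaussPDF t) := by ring
    _ ≤ 2 * exp (-τ ^ 2 / 2) * (tprFn ε τ t * fprD ε t) := by
        gcongr
    _ ≤ 2 * exp (-τ ^ 2 / 2) * ((tprFn ε τ t + fprFn ε t) * fprD ε t) := by
        gcongr
        · exact (fprD_pos hε₁ t).le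
        · exact le_add_of_nonneg_right (fprFn_pos hε₁ t).le

/-- The ratio is `2 (TPR + FPR) FPR' / ((TPR' + FPR') (TPR + 2 FPR))`, and the first-order
condition rewrites its denominator. -/
lemma lfdrFn_div_eq_of_stationary (hε₀ : 0 < ε) (hε₁ : ε < 1)
    (hstat : 2 * (tprD ε τ t - 2 * (ε * gaussPDF (t + τ))) * (tprFn ε τ t + fprFn ε t)
      = (tprFn ε τ t - 2 * idrFn ε τ t) * (tprD ε τ t + fprD ε t)) :
    lfdrFn ε τ t / ((1 + fdrFn ε τ t) / 2)
      = 2 * (tprFn ε τ t + fprFn ε t) * fprD ε t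
        / (2 * (tprFn ε τ t + fprFn ε t) * fprD ε t
          + 2 * (2 * (ε * gaussPDF (t + τ))) * (tprFn ε τ t + fprFn ε t)
          - 2 * (idrFn ε τ t * (tprD ε τ t + fprD ε t))) := by
  have hS := tprFn_add_fprFn_pos hε₀ hε₁ τ t
  have hid : (tprD ε τ t + fprD ε t) * (tprFn ε τ t + 2 * fprFn ε t)
      = 2 * (tprFn ε τ t + fprFn ε t) * fprD ε t
        + 2 * (2 * (ε * gaussPDF (t + τ))) * (tprFn ε τ t + fprFn ε t)
        - 2 * (idrFn ε τ t * (tprD ε τ t + fprD ε t)) := by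
    linear_combination hstat
  rw [← hid, lfdrFn, fdrFn]
  field_simp
  ring

lemma abs_lfdrFn_div_sub_one_le (hε₀ : 0 < ε) (hε : ε ≤ 1 / 2) (hτ : 1 ≤ τ)
    (hE : exp (-τ ^ 2 / 2) ≤ 1 / 6) (ht : 0 ≤ t) (hmax : IsMaxOn (sepFn ε τ) (Ici 0) t) :
    |lfdrFn ε τ t / ((1 + fdrFn ε τ t) / 2) - 1| ≤ 3 * exp (-τ ^ 2 / 2) := by
  have hε₁ : ε < 1 := by linarith
  obtain rfl | htpos := ht.eq_or_lt
  · exact absurd hmax (not_isMaxOn_sepFn_zero hε₀ hε₁ (by linarith))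
  have hS := tprFn_add_fprFn_pos hε₀ hε₁ τ t
  have hD := tprD_add_fprD_pos hε₀ hε₁ τ t
  rw [lfdrFn_div_eq_of_stationary hε₀ hε₁ (sepFn_stationary hε₀ hε₁ (by linarith) htpos hmax)]
  refine abs_div_add_sub_sub_one_le (by have := fprD_pos hε₁ t; positivity) ?_ ?_ ?_ ?_ hE
  · have := gaussPDF_pos (t + τ)
    positivity
  · have := two_mul_gaussPDF_add_le_fprD hε₀.le hε ht (by linarith : (0 : ℝ) ≤ τ)
    nlinarith
  · rw [idrFn_eq]
    have : 0 ≤ 1 - normCDF (t + τ) := sub_nonneg.mpr (normCDF_le_one (t + τ))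
    positivity
  · have := idrFn_mul_le hε₀ hε ht hτ
    linarith

end Proxy

theorem tendsto_lfdrFn_div_of_isMaxOn {ι : Type*} {l : Filter ι} {ε τ T : ι → ℝ}
    (hε : Tendsto ε l (nhdsWithin 0 (Ioi 0))) (hτ : Tendsto τ l atTop)
    (hT : ∀ᶠ i in l, 0 ≤ T i ∧ IsMaxOn (sepFn (ε i) (τ i)) (Ici 0) (T i)) :
    Tendsto (fun i => lfdrFn (ε i) (τ i) (T i) / ((1 + fdrFn (ε i) (τ i) (T i)) / 2)) l
      (nhds 1) := by
  have hE : Tendsto (fun i => exp (-τ i ^ 2 / 2)) l (nhds 0) :=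
    tendsto_exp_atBot.comp <|
      (tendsto_neg_atTop_atBot.comp ((tendsto_pow_atTop two_ne_zero).comp hτ)).atBot_div_const
        two_pos
  have hεpos : ∀ᶠ i in l, 0 < ε i := hε.eventually eventually_mem_nhdsWithin
  have hεhalf : ∀ᶠ i in l, ε i ≤ 1 / 2 :=
    (tendsto_nhds_of_tendsto_nhdsWithin hε).eventually (eventually_le_nhds one_half_pos)
  rw [tendsto_iff_norm_sub_tendsto_zero]
  refine squeeze_zero' (Eventually.of_forall fun _ => norm_nonneg _) ?_
    (by simpa using hE.const_mul 3)
  filter_upwards [hT, hεpos, hεhalf, hτ.eventually_ge_atTop 1,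
    hE.eventually (eventually_le_nhds (by norm_num : (0 : ℝ) < 1 / 6))]
    with i ⟨hT₀, hTmax⟩ hε₀ hε₁ hτ₁ hE₁
  exact abs_lfdrFn_div_sub_one_le hε₀ hε₁ hτ₁ hE₁ hT₀ hTmax

lemma rhoStar_nonneg (β : ℝ) : 0 ≤ rhoStar β := by
  unfold rhoStar
  split_ifs <;> first | positivity | linarith

theorem stmt5_general (β r : ℝ) (hβ1 : 1 / 2 < β)
    (hr1 : rhoStar β < r)
    (T : ℕ → ℝ)
    (hT : ∀ p : ℕ, T p ∈ Set.Ici (0 : ℝ) ∧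
      ∀ t ∈ Set.Ici (0 : ℝ), sepFn (epsP β p) (tauP r p) t ≤ sepFn (epsP β p) (tauP r p) (T p)) :
    Filter.Tendsto
      (fun p : ℕ =>
        lfdrFn (epsP β p) (tauP r p) (T p) / ((1 + fdrFn (epsP β p) (tauP r p) (T p)) / 2))
      Filter.atTop (nhds 1) := by
  have hr : 0 < r := (rhoStar_nonneg β).trans_lt hr1
  have hlog : Tendsto (fun p : ℕ => log p) atTop atTop :=
    tendsto_log_atTop.comp tendsto_natCast_atTop_atTop
  have hε : Tendsto (epsP β) atTop (nhdsWithin 0 (Ioi 0)) :=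
    tendsto_nhdsWithin_iff.mpr
      ⟨(tendsto_rpow_neg_atTop (by linarith)).comp tendsto_natCast_atTop_atTop,
        (eventually_ge_atTop 1).mono fun p hp => rpow_pos_of_pos (by exact_mod_cast hp) _⟩
  have hτ : Tendsto (tauP r) atTop atTop :=
    tendsto_sqrt_atTop.comp (hlog.const_mul_atTop (by positivity))
  exact tendsto_lfdrFn_div_of_isMaxOn hε hτ
    (Eventually.of_forall fun p => ⟨(hT p).1, isMaxOn_iff.mpr (hT p).2⟩)

/-- Asymptotic Tangent–Secant rule: Lfdr(T_ideal) / ((1 + FDR(T_ideal))/2) → 1. -/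
theorem stmt5 (β r : ℝ) (hβ1 : 1 / 2 < β) (hβ2 : β < 1)
    (hr1 : rhoStar β < r) (hr2 : r < 1)
    (T : ℕ → ℝ)
    (hT : ∀ p : ℕ, T p ∈ Set.Ici (0 : ℝ) ∧
      ∀ t ∈ Set.Ici (0 : ℝ), sepFn (epsP β p) (tauP r p) t ≤ sepFn (epsP β p) (tauP r p) (T p)) :
    Filter.Tendsto
      (fun p : ℕ =>
        lfdrFn (epsP β p) (tauP r p) (T p) / ((1 + fdrFn (epsP β p) (tauP r p) (T p)) / 2))
      Filter.atTop (nhds 1) :=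
  stmt5_general β r hβ1 hr1 T hT
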